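/- arXiv:1311.2147 — 2 statements merged into one kernel-verified Lean document; each statement's English description precedes it below -/
import Mathlib

section
/- After an incremental update on the set E_i(v) of edges incoming to v, for any s, b ∈ V and any edge (a,b): if (a,b) lies on a shortest path from s to b in G'_R that is not a shortest path in G_R, then the reversed edge (b,a) lies on a shortest path from b to v in G', i.e., (b,a) ∈ DAG'(b) and w'(b,a) + d'(a,v) = d'(b,v), so that (a,b) ∈ R_b. -/
/-!
The only edges whose weight changes are, in the reverse graph, edges `(v, u)` leaving `v`. A path
of `G'_R` avoiding them has the same weight in `G_R`, where distances can only be larger, so `p`,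
not shortest in `G_R`, leaves `v` along some edge. Since weights are positive, a shortest path to
`b` meets `b` only at its end, so `(a, b)` is the last edge of `p` and the part of `p` from `v` on
is a shortest path from `v` to `b` ending with `(a, b)`. Reversed, it gives
`d'(b,v) = w'(b,a) + d'(a,v)`, and its last edge alone is a shortest path, which puts `(b, a)` in
`DAG'(b)`.
-/

open scoped ENNReal

namespace BC

variable {V : Type*}

/-- `p` is a path from `s` to `t` in the weighted digraph with weight function `w`;
an edge is present iff its weight is not `⊤`. -/
def IsPath (w : V → V → ℝ≥0∞) (s t : V) (p : List V) : Prop :=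
  p ≠ [] ∧ p.head? = some s ∧ p.getLast? = some t ∧ p.Chain' (fun a b => w a b ≠ ⊤)

/-- The weight of a path: the sum of the weights of its consecutive edges. -/
noncomputable def pWeight (w : V → V → ℝ≥0∞) (p : List V) : ℝ≥0∞ :=
  ((p.zip p.tail).map fun e => w e.1 e.2).sum

/-- The shortest-path distance `d(s,t)` (equal to `⊤` if no path exists). -/
noncomputable def dist (w : V → V → ℝ≥0∞) (s t : V) : ℝ≥0∞ :=
  ⨅ p ∈ {p | IsPath w s t p}, pWeight w p

/-- `p` is a shortest path from `s` to `t`. -/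
def IsShortest (w : V → V → ℝ≥0∞) (s t : V) (p : List V) : Prop :=
  IsPath w s t p ∧ pWeight w p = dist w s t

/-- `σ_{st}`: the number of shortest paths from `s` to `t`. -/
noncomputable def nsp (w : V → V → ℝ≥0∞) (s t : V) : ℕ :=
  Set.ncard {p | IsShortest w s t p}

/-- `σ_{st}(x)`: the number of shortest paths from `s` to `t` passing through `x`. -/
noncomputable def nspVia (w : V → V → ℝ≥0∞) (s t x : V) : ℕ :=
  Set.ncard {p | IsShortest w s t p ∧ x ∈ p}

/-- The directed edge `(a,b)` lies on the path `p`. -/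
def edgeOn (p : List V) (a b : V) : Prop := (a, b) ∈ p.zip p.tail

/-- The shortest-path DAG rooted at `s`: the edges lying on shortest paths from `s`. -/
def dagSet (w : V → V → ℝ≥0∞) (s : V) : Set (V × V) :=
  {e | w e.1 e.2 ≠ ⊤ ∧ dist w s e.1 ≠ ⊤ ∧ dist w s e.1 + w e.1 e.2 = dist w s e.2}

variable {W W' : V → V → ℝ≥0∞} {s t x y a b : V} {p l r : List V}

theorem edgeOn_iff : edgeOn p a b ↔ ∃ l r, p = l ++ a :: b :: r := by
  induction p with
  | nil => simp [edgeOn]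
  | cons c q ih =>
    cases q with
    | nil => simp [edgeOn, List.cons_eq_append_iff]
    | cons d q =>
      show (a, b) ∈ (c, d) :: (d :: q).zip (d :: q).tail ↔ _
      rw [List.mem_cons]
      change _ ∨ edgeOn (d :: q) a b ↔ _
      rw [ih]
      constructor
      · rintro (h | ⟨l, r, h⟩)
        · obtain ⟨rfl, rfl⟩ := Prod.mk.inj h
          exact ⟨[], q, rfl⟩
        · exact ⟨c :: l, r, by rw [h, List.cons_append]⟩
      · rintro ⟨_ | ⟨e, l⟩, r, h⟩
        · obtain ⟨rfl, rfl, -⟩ : c = a ∧ d = b ∧ q = r := by simpa using h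
          exact Or.inl rfl
        · exact Or.inr ⟨l, r, (List.cons_eq_cons.mp h).2⟩

theorem isChain_iff_forall_edgeOn {R : V → V → Prop} :
    p.IsChain R ↔ ∀ a b, edgeOn p a b → R a b := by
  simp only [List.isChain_iff_forall_rel_of_append_cons_cons, edgeOn_iff]
  aesop

@[simp] theorem pWeight_singleton : pWeight W [x] = 0 := rfl

@[simp] theorem pWeight_cons_cons : pWeight W (x :: y :: l) = W x y + pWeight W (y :: l) := by
  simp [pWeight]

theorem pWeight_append_cons :
    pWeight W (l ++ x :: r) = pWeight W (l ++ [x]) + pWeight W (x :: r) := by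
  induction l with
  | nil => simp
  | cons c l ih =>
    cases l with
    | nil => simp
    | cons d l =>
      simp only [List.cons_append, pWeight_cons_cons] at ih ⊢
      rw [ih, add_assoc]

theorem pWeight_reverse : pWeight (fun x y => W y x) p.reverse = pWeight W p := by
  induction p with
  | nil => rfl
  | cons x q ih =>
    cases q with
    | nil => rfl
    | cons y q =>
      rw [List.reverse_cons, List.reverse_cons, List.append_assoc, List.singleton_append,
        pWeight_append_cons, ← List.reverse_cons, ih]
      simp [add_comm]

theorem pWeight_congr (h : ∀ x y, edgeOn p x y → W x y = W' x y) : pWeight W p = pWeight W' p :=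
  congrArg List.sum (List.map_congr_left fun e he => h e.1 e.2 he)

theorem pWeight_ne_top (h : p.IsChain fun a b => W a b ≠ ⊤) : pWeight W p ≠ ⊤ := by
  induction h with
  | nil => simp [pWeight]
  | singleton => simp
  | cons_cons hab _ ih => rw [pWeight_cons_cons]; exact ENNReal.add_ne_top.mpr ⟨hab, ih⟩

theorem isPath_append_cons_iff :
    IsPath W s t (l ++ x :: r) ↔ IsPath W s x (l ++ [x]) ∧ IsPath W x t (x :: r) := by
  have hhead : (l ++ x :: r).head? = (l ++ [x]).head? := by cases l <;> rfl
  constructor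
  · rintro ⟨-, hs, ht, hch⟩
    obtain ⟨hch₁, hch₂⟩ := List.isChain_split.mp hch
    rw [List.getLast?_append_cons] at ht
    exact ⟨⟨by simp, by rwa [← hhead], by simp, hch₁⟩, ⟨by simp, rfl, ht, hch₂⟩⟩
  · rintro ⟨⟨-, hs, -, hch₁⟩, ⟨-, -, ht, hch₂⟩⟩
    exact ⟨by simp, by rwa [hhead], by rwa [List.getLast?_append_cons],
      List.isChain_split.mpr ⟨hch₁, hch₂⟩⟩

theorem IsPath.reverse (h : IsPath W s t p) : IsPath (fun x y => W y x) t s p.reverse := by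
  obtain ⟨hne, hs, ht, hch⟩ := h
  exact ⟨by simpa using hne, by simpa using ht, by simpa using hs, List.isChain_reverse.mpr hch⟩

theorem IsPath.dist_le (h : IsPath W s t p) : dist W s t ≤ pWeight W p := iInf₂_le p h

theorem exists_isPath_pWeight_lt {c : ℝ≥0∞} (h : dist W s t < c) :
    ∃ p, IsPath W s t p ∧ pWeight W p < c := by
  simpa [dist, iInf_lt_iff] using h

@[simp] theorem dist_self : dist W x x = 0 :=
  nonpos_iff_eq_zero.mp (IsPath.dist_le (p := [x]) ⟨by simp, rfl, rfl, .singleton x⟩)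

theorem dist_mono (hle : ∀ x y, W' x y ≤ W x y) : dist W' s t ≤ dist W s t := by
  refine le_iInf₂ fun p ⟨hne, hs, ht, hch⟩ => ?_
  calc dist W' s t ≤ pWeight W' p :=
        IsPath.dist_le ⟨hne, hs, ht, hch.imp fun _ _ h => ne_top_of_le_ne_top h (hle _ _)⟩
    _ ≤ pWeight W p := List.sum_le_sum fun e _ => hle e.1 e.2

theorem dist_reverse : dist (fun x y => W y x) s t = dist W t s := by
  have key : ∀ (W : V → V → ℝ≥0∞) s t, dist (fun x y => W y x) s t ≤ dist W t s :=
    fun W s t => le_iInf₂ fun p hp => pWeight_reverse (W := W) ▸ hp.reverse.dist_le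
  exact le_antisymm (key W s t) (key (fun x y => W y x) t s)

theorem IsShortest.reverse (h : IsShortest W s t p) :
    IsShortest (fun x y => W y x) t s p.reverse :=
  ⟨h.1.reverse, by rw [pWeight_reverse, dist_reverse, h.2]⟩

theorem IsShortest.suffix (h : IsShortest W s t (l ++ x :: r)) : IsShortest W x t (x :: r) := by
  obtain ⟨hpre, hsuf⟩ := isPath_append_cons_iff.mp h.1
  refine ⟨hsuf, le_antisymm ?_ hsuf.dist_le⟩
  by_contra! hlt
  obtain ⟨q, hq, hqlt⟩ := exists_isPath_pWeight_lt hlt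
  obtain ⟨q, rfl⟩ := List.head?_eq_some_iff.mp hq.2.1
  have hshorter := (isPath_append_cons_iff.mpr ⟨hpre, hq⟩).dist_le
  rw [pWeight_append_cons] at hshorter
  refine (hshorter.trans_lt ?_).ne h.2.symm
  rw [pWeight_append_cons (l := l) (r := r)]
  exact ENNReal.add_lt_add_left (pWeight_ne_top hpre.2.2.2) hqlt

theorem IsShortest.prefix (h : IsShortest W s t (l ++ x :: r)) : IsShortest W s x (l ++ [x]) := by
  have h' := h.reverse
  rw [List.reverse_append, List.reverse_cons, List.append_assoc, List.singleton_append] at h'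
  simpa using h'.suffix.reverse

theorem IsShortest.dist_add_of_append_edge (h : IsShortest W s t (l ++ [a, t])) :
    dist W s a + W a t = dist W s t := by
  rw [← h.2, pWeight_append_cons, (h.prefix (r := [t])).2]
  simp

theorem IsShortest.eq_singleton (hpos : ∀ x y, 0 < W x y) (h : IsShortest W x x p) : p = [x] := by
  obtain ⟨r, rfl⟩ := List.head?_eq_some_iff.mp h.1.2.1
  cases r with
  | nil => rfl
  | cons y r =>
    have hzero : W x y + pWeight W (y :: r) = 0 := by rw [← pWeight_cons_cons, h.2, dist_self]
    exact absurd (add_eq_zero.mp hzero).1 (hpos x y).ne'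

theorem IsShortest.isSuffix_of_edgeOn (hpos : ∀ x y, 0 < W x y) (h : IsShortest W s t p)
    (he : edgeOn p a t) : [a, t] <:+ p := by
  obtain ⟨l, r, rfl⟩ := edgeOn_iff.mp he
  rw [← List.singleton_append, ← List.append_assoc] at h
  obtain rfl : r = [] := (List.cons_eq_cons.mp (h.suffix.eq_singleton hpos)).2
  exact List.suffix_append l _

theorem IsShortest.of_le (hle : ∀ x y, W' x y ≤ W x y)
    (heq : ∀ x y, edgeOn p x y → W' x y = W x y) (h : IsShortest W' s t p) :
    IsShortest W s t p := by
  have hpath : IsPath W s t p := ⟨h.1.1, h.1.2.1, h.1.2.2.1, isChain_iff_forall_edgeOn.mpr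
    fun x y hxy => heq x y hxy ▸ isChain_iff_forall_edgeOn.mp h.1.2.2.2 x y hxy⟩
  refine ⟨hpath, le_antisymm ?_ hpath.dist_le⟩
  calc pWeight W p = pWeight W' p := (pWeight_congr heq).symm
    _ = dist W' s t := h.2
    _ ≤ dist W s t := dist_mono hle

theorem IsShortest.mem_dagSet (h : IsShortest W x y [x, y]) : (x, y) ∈ dagSet W x := by
  have hxy : dist W x y = W x y := by simp [← h.2]
  refine ⟨?_, by simp, by simp [hxy]⟩
  simpa using pWeight_ne_top h.1.2.2.2

theorem new_reverse_edge_in_Rb_general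
(w w' : V → V → ℝ≥0∞) (v : V) (U : Finset V)
    (hpos' : ∀ a b, 0 < w' a b)
    (hdec : ∀ u ∈ U, w' u v < w u v)
    (hsame : ∀ a b : V, ¬(b = v ∧ a ∈ U) → w' a b = w a b)
    (s b a : V) (p : List V)
    (hp : IsShortest (fun x y => w' y x) s b p)
    (hnot : ¬ IsShortest (fun x y => w y x) s b p)
    (he : edgeOn p a b) :
    (b, a) ∈ dagSet w' b ∧ w' b a + dist w' a v = dist w' b v := by
  have hle : ∀ x y, w' y x ≤ w y x := fun x y => by
    by_cases h : x = v ∧ y ∈ U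
    · obtain ⟨rfl, hy⟩ := h
      exact (hdec y hy).le
    · exact (hsame y x h).le
  obtain ⟨u, hvu⟩ : ∃ u, edgeOn p v u := by
    by_contra! hno
    refine hnot (hp.of_le hle fun x y hxy => hsame y x ?_)
    rintro ⟨rfl, -⟩
    exact hno y hxy
  obtain ⟨l, r, rfl⟩ := edgeOn_iff.mp hvu
  obtain ⟨m, hm⟩ : [a, b] <:+ v :: u :: r :=
    List.suffix_of_suffix_length_le (hp.isSuffix_of_edgeOn (fun x y => hpos' y x) he)
      (List.suffix_append l _) (by simp)
  have hvb := hp.suffix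
  rw [← hm] at hvb
  have hab : IsShortest w' b a [b, a] := (hvb.suffix (l := m)).reverse
  refine ⟨hab.mem_dagSet, ?_⟩
  simpa only [dist_reverse, add_comm] using hvb.dist_add_of_append_edge

/-- after an incremental update on the edges `E_i(v)` incoming to `v`,
if `(a,b)` lies on a shortest path from `s` to `b` in the reverse graph `G'_R` that is
not a shortest path in `G_R`, then the reversed edge `(b,a)` lies on a shortest path
from `b` to `v` in `G'`: `(b,a) ∈ DAG'(b)` and `w'(b,a) + d'(a,v) = d'(b,v)`
(so that `(a,b) ∈ R_b`). -/
theorem new_reverse_edge_in_Rb [Fintype V]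
(w w' : V → V → ℝ≥0∞) (v : V) (U : Finset V)
    (hpos : ∀ a b, 0 < w a b) (hpos' : ∀ a b, 0 < w' a b)
    (hdec : ∀ u ∈ U, w' u v < w u v)
    (hsame : ∀ a b : V, ¬(b = v ∧ a ∈ U) → w' a b = w a b)
    (s b a : V) (p : List V)
    (hp : IsShortest (fun x y => w' y x) s b p)
    (hnot : ¬ IsShortest (fun x y => w y x) s b p)
    (he : edgeOn p a b) :
    (b, a) ∈ dagSet w' b ∧ w' b a + dist w' a v = dist w' b v :=
  new_reverse_edge_in_Rb_general w w' v U hpos' hdec hsame s b a p hp hnot he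

end BC
end

section
/- After an incremental edge update on (u,v) with new weight w'(u,v), for every pair of vertices s, t the number of shortest paths from s to t in G' that contain the edge (u,v) equals σ_{su} · σ_{vt} if d'(s,t) = d(s,u) + w'(u,v) + d(v,t), and equals 0 if d'(s,t) < d(s,u) + w'(u,v) + d(v,t). -/
/-!
A shortest `w'`-path through `(u,v)` splits at its first use of `(u,v)` into a prefix `s ⇝ u`,
which avoids the updated edge and so costs at least `d(s,u)`, and a suffix `v ⇝ t`, which costs at
least `d(v,t)` because from its last visit to `v` on it uses no edge into `v`. So every such path
weighs at least `d(s,u) + w'(u,v) + d(v,t)`, which settles the strict case. In the case of equality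
both bounds are tight, and since weights are positive, shortest paths into `u` or out of `v` never
contain `(u,v)`; hence concatenation is a bijection from pairs of shortest `w`-paths `s ⇝ u`,
`v ⇝ t` onto the shortest `w'`-paths through `(u,v)`.
-/

open scoped ENNReal

namespace BC

variable {V : Type*}

theorem isChain_iff_forall_mem_zip_tail {α : Type*} {R : α → α → Prop} :
    ∀ {l : List α}, l.IsChain R ↔ ∀ e ∈ l.zip l.tail, R e.1 e.2
  | [] | [_] => by simp
  | a :: b :: l => by
    simp [List.isChain_cons_cons, isChain_iff_forall_mem_zip_tail (l := b :: l)]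

theorem zip_tail_append {α : Type*} {a b : α} : ∀ {l₁ l₂ : List α},
    l₁.getLast? = some a → l₂.head? = some b →
      (l₁ ++ l₂).zip (l₁ ++ l₂).tail = l₁.zip l₁.tail ++ (a, b) :: l₂.zip l₂.tail
  | [], _, h₁, _ => by simp at h₁
  | [_], _ :: _, h₁, h₂ => by simp_all
  | x :: y :: l₁, l₂, h₁, h₂ => by
    rw [List.getLast?_cons_cons] at h₁
    have ih := zip_tail_append h₁ h₂
    simp only [List.cons_append, List.tail_cons, List.zip_cons_cons] at ih ⊢
    rw [ih]

theorem exists_eq_append_cons_notMem {α : Type*} {a : α} :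
    ∀ {l : List α}, a ∈ l → ∃ s t, l = s ++ a :: t ∧ a ∉ t
  | b :: l, h => by
    by_cases ha : a ∈ l
    · obtain ⟨s, t, rfl, ht⟩ := exists_eq_append_cons_notMem ha
      exact ⟨b :: s, t, rfl, ht⟩
    · obtain rfl : a = b := by simpa [ha] using h
      exact ⟨[], l, rfl, ha⟩

theorem list_sum_ne_top : ∀ {l : List ℝ≥0∞}, (∀ x ∈ l, x ≠ ⊤) → l.sum ≠ ⊤
  | [], _ => by simp
  | a :: l, h => by
    simp only [List.mem_cons, forall_eq_or_imp] at h
    simpa [ENNReal.add_ne_top, h.1] using list_sum_ne_top h.2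

theorem exists_split_first_edgeOn {u v : V} : ∀ {p : List V}, edgeOn p u v →
    ∃ p₁ p₂, p = p₁ ++ p₂ ∧ p₁.getLast? = some u ∧ p₂.head? = some v ∧ ¬edgeOn p₁ u v
  | [], h | [_], h => by simp [edgeOn] at h
  | a :: b :: r, h => by
    by_cases hab : (a, b) = (u, v)
    · obtain ⟨rfl, rfl⟩ := Prod.mk.inj hab
      exact ⟨[a], b :: r, rfl, rfl, rfl, by simp [edgeOn]⟩
    · have h' : edgeOn (b :: r) u v := by
        simpa [edgeOn, Ne.symm hab] using h
      obtain ⟨q₁, q₂, hsplit, hlast, hhead, hnot⟩ := exists_split_first_edgeOn h'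
      cases q₁ with
      | nil => simp at hlast
      | cons x q₁ =>
        obtain ⟨hx, rfl⟩ := List.cons_eq_cons.1 hsplit
        subst hx
        refine ⟨a :: b :: q₁, q₂, rfl, by simpa using hlast, hhead, ?_⟩
        intro hon
        rw [edgeOn, List.tail_cons, List.zip_cons_cons, List.mem_cons] at hon
        exact hon.elim (fun h => hab h.symm) hnot

theorem eq_of_append_eq_append_of_not_edgeOn {u v : V} {p₁ p₂ q₁ q₂ : List V}
    (h : p₁ ++ p₂ = q₁ ++ q₂) (hp₁ : p₁.getLast? = some u) (hq₁ : q₁.getLast? = some u)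
    (hp₂ : p₂.head? = some v) (hq₂ : q₂.head? = some v)
    (np₁ : ¬edgeOn p₁ u v) (np₂ : ¬edgeOn p₂ u v) : p₁ = q₁ ∧ p₂ = q₂ := by
  have hedges := zip_tail_append hq₁ hq₂
  rw [← h, zip_tail_append hp₁ hp₂, List.append_cons_inj_of_notMem np₁ np₂] at hedges
  refine List.append_inj h ?_
  have hlen := congrArg List.length hedges.1
  simp only [List.length_zip, List.length_tail] at hlen
  have : p₁ ≠ [] := by rintro rfl; simp at hp₁
  have : q₁ ≠ [] := by rintro rfl; simp at hq₁
  grind [List.length_pos_iff]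

section Paths

variable {w : V → V → ℝ≥0∞} {s t u v : V} {p p₁ p₂ : List V}

theorem isPath_iff : IsPath w s t p ↔
    p ≠ [] ∧ p.head? = some s ∧ p.getLast? = some t ∧ p.IsChain (fun a b => w a b ≠ ⊤) :=
  Iff.rfl

theorem pWeight_append (h₁ : p₁.getLast? = some u) (h₂ : p₂.head? = some v) :
    pWeight w (p₁ ++ p₂) = pWeight w p₁ + w u v + pWeight w p₂ := by
  simp only [pWeight, zip_tail_append h₁ h₂, List.map_append, List.map_cons, List.sum_append,
    List.sum_cons, add_assoc]

theorem isPath_append_iff (h₁ : p₁.getLast? = some u) (h₂ : p₂.head? = some v) :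
    IsPath w s t (p₁ ++ p₂) ↔ IsPath w s u p₁ ∧ w u v ≠ ⊤ ∧ IsPath w v t p₂ := by
  have hp₁ : p₁ ≠ [] := by rintro rfl; simp at h₁
  have hp₂ : p₂ ≠ [] := by rintro rfl; simp at h₂
  simp only [isPath_iff, List.isChain_append, List.head?_append_of_ne_nil _ hp₁,
    List.getLast?_append_of_ne_nil _ hp₂, h₁, h₂]
  aesop

theorem IsPath.of_append_right (h : IsPath w s t (p₁ ++ p₂)) (h₂ : p₂.head? = some v) :
    IsPath w v t p₂ := by
  cases h₁ : p₁.getLast? with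
  | none =>
    rw [List.getLast?_eq_none_iff.1 h₁, List.nil_append] at h
    exact ⟨h.1, h₂, h.2.2⟩
  | some u => exact ((isPath_append_iff h₁ h₂).1 h).2.2

theorem pWeight_le_pWeight_append_left : pWeight w p₂ ≤ pWeight w (p₁ ++ p₂) := by
  cases h₁ : p₁.getLast? with
  | none => rw [List.getLast?_eq_none_iff.1 h₁, List.nil_append]
  | some u =>
    cases h₂ : p₂.head? with
    | none => simp [List.head?_eq_none_iff.1 h₂, pWeight]
    | some v =>
      rw [pWeight_append h₁ h₂]
      exact le_add_self

theorem dist_le_pWeight (h : IsPath w s t p) : dist w s t ≤ pWeight w p :=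
  iInf₂_le p h

theorem IsPath.pWeight_ne_top (h : IsPath w s t p) : pWeight w p ≠ ⊤ := by
  have hedges := isChain_iff_forall_mem_zip_tail.1 h.2.2.2
  exact list_sum_ne_top fun x hx => by
    obtain ⟨e, he, rfl⟩ := List.mem_map.1 hx
    exact hedges e he

theorem IsShortest.dist_ne_top (h : IsShortest w s t p) : dist w s t ≠ ⊤ :=
  h.2 ▸ h.1.pWeight_ne_top

end Paths

theorem ENNReal.eq_and_eq_of_add_add_eq {a b c a' b' : ℝ≥0∞} (ha : a ≤ a') (hb : b ≤ b')
    (h : a' + c + b' = a + c + b) (hfin : a' + c + b' ≠ ⊤) : a' = a ∧ b' = b := by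
  have hcb : c + b' ≠ ⊤ := by rw [add_assoc] at hfin; exact ENNReal.add_ne_top.1 hfin |>.2
  have hac : a + c ≠ ⊤ := by
    rw [h] at hfin; exact ENNReal.add_ne_top.1 hfin |>.1
  refine ⟨le_antisymm ?_ ha, le_antisymm ?_ hb⟩
  · rw [← ENNReal.add_le_add_iff_right hcb, ← add_assoc, h, add_assoc]
    gcongr
  · rw [← ENNReal.add_le_add_iff_left hac, ← h]
    gcongr

section Update

variable {w w' : V → V → ℝ≥0∞} {s t u v : V} {p p₁ p₂ : List V}

theorem eq_on_zip_tail_of_not_edgeOn (hsame : ∀ a b : V, (a, b) ≠ (u, v) → w' a b = w a b)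
    (hp : ¬edgeOn p u v) : ∀ e ∈ p.zip p.tail, w' e.1 e.2 = w e.1 e.2 :=
  fun e he => hsame e.1 e.2 fun h => hp (by rwa [edgeOn, ← h])

theorem pWeight_eq_of_not_edgeOn (hsame : ∀ a b : V, (a, b) ≠ (u, v) → w' a b = w a b)
    (hp : ¬edgeOn p u v) : pWeight w' p = pWeight w p :=
  congrArg List.sum (List.map_congr_left (eq_on_zip_tail_of_not_edgeOn hsame hp))

theorem isPath_iff_of_not_edgeOn (hsame : ∀ a b : V, (a, b) ≠ (u, v) → w' a b = w a b)
    (hp : ¬edgeOn p u v) : IsPath w' s t p ↔ IsPath w s t p := by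
  simp only [isPath_iff, isChain_iff_forall_mem_zip_tail]
  refine and_congr_right' (and_congr_right' (and_congr_right' (forall₂_congr fun e he => ?_)))
  rw [eq_on_zip_tail_of_not_edgeOn hsame hp e he]

theorem dist_le_pWeight_of_isPath_from (hsame : ∀ a b : V, (a, b) ≠ (u, v) → w' a b = w a b)
    (hp : IsPath w' v t p) : dist w v t ≤ pWeight w' p := by
  obtain ⟨q, r, rfl, hr⟩ := exists_eq_append_cons_notMem (List.mem_of_mem_head? hp.2.1)
  have hnot : ¬edgeOn (v :: r) u v := fun he => hr (by simpa using (List.of_mem_zip he).2)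
  have hsuffix := (isPath_iff_of_not_edgeOn hsame hnot).1 (hp.of_append_right rfl)
  calc dist w v t ≤ pWeight w (v :: r) := dist_le_pWeight hsuffix
    _ = pWeight w' (v :: r) := (pWeight_eq_of_not_edgeOn hsame hnot).symm
    _ ≤ pWeight w' (q ++ v :: r) := pWeight_le_pWeight_append_left

theorem IsPath.exists_split_of_edgeOn (hsame : ∀ a b : V, (a, b) ≠ (u, v) → w' a b = w a b)
    (hp : IsPath w' s t p) (he : edgeOn p u v) :
    ∃ p₁ p₂, p = p₁ ++ p₂ ∧ p₁.getLast? = some u ∧ p₂.head? = some v ∧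
      IsPath w s u p₁ ∧ pWeight w' p₁ = pWeight w p₁ ∧ IsPath w' v t p₂ := by
  obtain ⟨p₁, p₂, rfl, h₁, h₂, hn⟩ := exists_split_first_edgeOn he
  obtain ⟨hp₁, -, hp₂⟩ := (isPath_append_iff h₁ h₂).1 hp
  exact ⟨p₁, p₂, rfl, h₁, h₂, (isPath_iff_of_not_edgeOn hsame hn).1 hp₁,
    pWeight_eq_of_not_edgeOn hsame hn, hp₂⟩

theorem dist_add_le_pWeight_of_edgeOn (hsame : ∀ a b : V, (a, b) ≠ (u, v) → w' a b = w a b)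
    (hp : IsPath w' s t p) (he : edgeOn p u v) :
    dist w s u + w' u v + dist w v t ≤ pWeight w' p := by
  obtain ⟨p₁, p₂, rfl, h₁, h₂, hp₁, hweight, hp₂⟩ := hp.exists_split_of_edgeOn hsame he
  rw [pWeight_append h₁ h₂, hweight]
  gcongr
  exacts [dist_le_pWeight hp₁, dist_le_pWeight_of_isPath_from hsame hp₂]

theorem IsShortest.not_edgeOn_out_of_target (hpos : 0 < w u v) (h : IsShortest w s u p) :
    ¬edgeOn p u v := by
  intro he
  obtain ⟨p₁, p₂, rfl, h₁, h₂, -⟩ := exists_split_first_edgeOn he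
  have hp₁ := ((isPath_append_iff h₁ h₂).1 h.1).1
  refine lt_irrefl (dist w s u) ?_
  calc dist w s u < dist w s u + w u v := ENNReal.lt_add_right h.dist_ne_top hpos.ne'
    _ ≤ pWeight w p₁ + w u v := by gcongr; exact dist_le_pWeight hp₁
    _ ≤ pWeight w p₁ + w u v + pWeight w p₂ := le_self_add
    _ = dist w s u := by rw [← pWeight_append h₁ h₂, h.2]

theorem not_edgeOn_into_source_of_pWeight_le_dist
    (hsame : ∀ a b : V, (a, b) ≠ (u, v) → w' a b = w a b)
    (hpos : 0 < w' u v) (hp : IsPath w' v t p) (hle : pWeight w' p ≤ dist w v t) :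
    ¬edgeOn p u v := by
  intro he
  obtain ⟨p₁, p₂, rfl, h₁, h₂, -⟩ := exists_split_first_edgeOn he
  have hp₂ := ((isPath_append_iff h₁ h₂).1 hp).2.2
  have hfin : dist w v t ≠ ⊤ :=
    ne_top_of_le_ne_top hp₂.pWeight_ne_top (dist_le_pWeight_of_isPath_from hsame hp₂)
  refine lt_irrefl (dist w v t) ?_
  calc dist w v t < w' u v + dist w v t := by
        rw [add_comm]; exact ENNReal.lt_add_right hfin hpos.ne'
    _ ≤ w' u v + pWeight w' p₂ := by gcongr; exact dist_le_pWeight_of_isPath_from hsame hp₂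
    _ ≤ pWeight w' p₁ + w' u v + pWeight w' p₂ := by rw [add_assoc]; exact le_add_self
    _ ≤ dist w v t := by rwa [← pWeight_append h₁ h₂]

theorem IsShortest.not_edgeOn_into_source (hpos : 0 < w u v) (h : IsShortest w v t p) :
    ¬edgeOn p u v :=
  not_edgeOn_into_source_of_pWeight_le_dist (fun _ _ _ => rfl) hpos h.1 h.2.le

theorem injOn_append_isShortest (hpos : 0 < w u v) :
    Set.InjOn (fun x : List V × List V => x.1 ++ x.2)
      ({p | IsShortest w s u p} ×ˢ {p | IsShortest w v t p}) := by
  rintro ⟨p₁, p₂⟩ ⟨hp₁, hp₂⟩ ⟨q₁, q₂⟩ ⟨hq₁, hq₂⟩ h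
  obtain ⟨rfl, rfl⟩ := eq_of_append_eq_append_of_not_edgeOn h hp₁.1.2.2.1 hq₁.1.2.2.1
    hp₂.1.2.1 hq₂.1.2.1 (hp₁.not_edgeOn_out_of_target hpos) (hp₂.not_edgeOn_into_source hpos)
  rfl

theorem IsShortest.append_of_dist_eq (hsame : ∀ a b : V, (a, b) ≠ (u, v) → w' a b = w a b)
    (hpos : 0 < w u v) (htop : w' u v ≠ ⊤)
    (heq : dist w' s t = dist w s u + w' u v + dist w v t)
    (hp₁ : IsShortest w s u p₁) (hp₂ : IsShortest w v t p₂) :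
    IsShortest w' s t (p₁ ++ p₂) ∧ edgeOn (p₁ ++ p₂) u v := by
  have hn₁ := hp₁.not_edgeOn_out_of_target hpos
  have hn₂ := hp₂.not_edgeOn_into_source hpos
  have h₁ : p₁.getLast? = some u := hp₁.1.2.2.1
  have h₂ : p₂.head? = some v := hp₂.1.2.1
  refine ⟨⟨(isPath_append_iff h₁ h₂).2 ⟨(isPath_iff_of_not_edgeOn hsame hn₁).2 hp₁.1, htop,
    (isPath_iff_of_not_edgeOn hsame hn₂).2 hp₂.1⟩, ?_⟩, ?_⟩
  · rw [pWeight_append h₁ h₂, pWeight_eq_of_not_edgeOn hsame hn₁,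
      pWeight_eq_of_not_edgeOn hsame hn₂, hp₁.2, hp₂.2, heq]
  · simp [edgeOn, zip_tail_append h₁ h₂]

theorem IsShortest.exists_append_of_dist_eq
    (hsame : ∀ a b : V, (a, b) ≠ (u, v) → w' a b = w a b) (hpos' : 0 < w' u v)
    (heq : dist w' s t = dist w s u + w' u v + dist w v t)
    (hp : IsShortest w' s t p) (he : edgeOn p u v) :
    ∃ p₁ p₂, IsShortest w s u p₁ ∧ IsShortest w v t p₂ ∧ p₁ ++ p₂ = p := by
  obtain ⟨p₁, p₂, rfl, h₁, h₂, hp₁, hweight, hp₂⟩ := hp.1.exists_split_of_edgeOn hsame he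
  have hsum := hp.2
  rw [pWeight_append h₁ h₂, heq] at hsum
  obtain ⟨hw₁, hw₂⟩ := ENNReal.eq_and_eq_of_add_add_eq (hweight ▸ dist_le_pWeight hp₁)
    (dist_le_pWeight_of_isPath_from hsame hp₂) hsum
    (by rw [← pWeight_append h₁ h₂]; exact hp.1.pWeight_ne_top)
  have hn₂ := not_edgeOn_into_source_of_pWeight_le_dist hsame hpos' hp₂ hw₂.le
  exact ⟨p₁, p₂, ⟨hp₁, hweight ▸ hw₁⟩,
    ⟨(isPath_iff_of_not_edgeOn hsame hn₂).1 hp₂, pWeight_eq_of_not_edgeOn hsame hn₂ ▸ hw₂⟩, rfl⟩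

theorem setOf_isShortest_edgeOn_eq_image_append
    (hsame : ∀ a b : V, (a, b) ≠ (u, v) → w' a b = w a b)
    (hpos : 0 < w u v) (hpos' : 0 < w' u v) (htop : w' u v ≠ ⊤)
    (heq : dist w' s t = dist w s u + w' u v + dist w v t) :
    {p | IsShortest w' s t p ∧ edgeOn p u v} =
      (fun x : List V × List V => x.1 ++ x.2) ''
        ({p | IsShortest w s u p} ×ˢ {p | IsShortest w v t p}) := by
  ext p
  constructor
  · rintro ⟨hp, he⟩
    obtain ⟨p₁, p₂, hp₁, hp₂, rfl⟩ := hp.exists_append_of_dist_eq hsame hpos' heq he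
    exact ⟨(p₁, p₂), ⟨hp₁, hp₂⟩, rfl⟩
  · rintro ⟨⟨p₁, p₂⟩, ⟨hp₁, hp₂⟩, rfl⟩
    exact hp₁.append_of_dist_eq hsame hpos htop heq hp₂

end Update

theorem count_new_paths_through_uv_general (w w' : V → V → ℝ≥0∞) (u v : V)
    (hpos : ∀ a b, 0 < w a b) (hpos' : ∀ a b, 0 < w' a b)
    (hdec : w' u v < w u v)
    (hsame : ∀ a b : V, (a, b) ≠ (u, v) → w' a b = w a b) (s t : V) :
    (dist w' s t = dist w s u + w' u v + dist w v t →
      Set.ncard {p | IsShortest w' s t p ∧ edgeOn p u v} =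
        nsp w s u * nsp w v t) ∧
    (dist w' s t < dist w s u + w' u v + dist w v t →
      Set.ncard {p | IsShortest w' s t p ∧ edgeOn p u v} = 0) := by
  refine ⟨fun heq => ?_, fun hlt => ?_⟩
  · rw [setOf_isShortest_edgeOn_eq_image_append hsame (hpos u v) (hpos' u v) hdec.ne_top heq,
      (injOn_append_isShortest (hpos u v)).ncard_image, Set.ncard_prod, nsp, nsp]
  · convert Set.ncard_empty (List V)
    refine Set.eq_empty_of_forall_notMem fun p ⟨hp, he⟩ => hlt.not_ge ?_
    exact hp.2 ▸ dist_add_le_pWeight_of_edgeOn hsame hp.1 he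

/-- after an incremental edge update on `(u,v)` with new weight
`w'(u,v)`, for every pair `s, t`, the number of shortest paths from `s` to `t` in
`G'` containing the edge `(u,v)` equals `σ_{su} · σ_{vt}` if
`d'(s,t) = d(s,u) + w'(u,v) + d(v,t)`, and equals `0` if
`d'(s,t) < d(s,u) + w'(u,v) + d(v,t)`. -/
theorem count_new_paths_through_uv [Fintype V] (w w' : V → V → ℝ≥0∞) (u v : V)
    (hpos : ∀ a b, 0 < w a b) (hpos' : ∀ a b, 0 < w' a b)
    (hdec : w' u v < w u v)
    (hsame : ∀ a b : V, (a, b) ≠ (u, v) → w' a b = w a b) (s t : V) :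
    (dist w' s t = dist w s u + w' u v + dist w v t →
      Set.ncard {p | IsShortest w' s t p ∧ edgeOn p u v} =
        nsp w s u * nsp w v t) ∧
    (dist w' s t < dist w s u + w' u v + dist w v t →
      Set.ncard {p | IsShortest w' s t p ∧ edgeOn p u v} = 0) :=
  count_new_paths_through_uv_general w w' u v hpos hpos' hdec hsame s t

end BC
end
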